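/- Coverage guarantee for conformalized quantile regression (Algorithm 2, split conformal Quantile-DeepONet regression). Let 𝒳 be a measurable space, let n be a positive natural number, let α ∈ (0,1) be such that ⌈(n+1)(1−α)⌉ ≤ n, let t_lo : 𝒳 → ℝ and t_hi : 𝒳 → ℝ be measurable functions, and let (X₁,Y₁), …, (Xₙ,Yₙ), (X_test, Y_test) be independent and identically distributed random pairs taking values in 𝒳 × ℝ. Define calibration scores sᵢ = max( t_lo(Xᵢ) − Yᵢ , Yᵢ − t_hi(Xᵢ) ) for i = 1, …, n, and let q̂ be the ⌈(n+1)(1−α)⌉-th smallest value among s₁, …, sₙ. Then ℙ( t_lo(X_test) − q̂ ≤ Y_test ≤ t_hi(X_test) + q̂ ) ≥ 1 − α. -/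

import Mathlib

/-!
Call the score `s(x, y) = max (t_lo x - y, y - t_hi x)` and let `k = ⌈(n+1)(1-α)⌉`. If fewer
than `k` of the `n + 1` scores lie strictly below the test score, then the test score is at most
the `k`-th smallest calibration score `q̂`, which is exactly the event
`t_lo - q̂ ≤ Y_test ≤ t_hi + q̂`. Any `n + 1` reals have at least `k` indices with fewer than `k`
values strictly below them, and the i.i.d. scores are exchangeable, so each index has this
property with the same probability `p`; hence `k ≤ (n + 1) p`, and `p ≥ k / (n + 1) ≥ 1 - α`.
-/

open MeasureTheory ProbabilityTheory
open scoped Classical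

/-- The `k`-th smallest value (order statistic of rank `k`, 1-indexed) of a list of reals. -/
noncomputable def kthSmallest (l : List ℝ) (k : ℕ) : ℝ :=
  (l.mergeSort (fun a b => a ≤ b)).getD (k - 1) 0

open Finset
open scoped ENNReal

section StrictRank

variable {ι β : Type*} [Fintype ι] [LinearOrder β]

def strictRank (a : ι → β) (j : ι) : ℕ := #{i | a i < a j}

theorem strictRank_comp_equiv {κ : Type*} [Fintype κ] (a : ι → β) (e : κ ≃ ι) (j : κ) :
    strictRank (a ∘ e) j = strictRank a (e j) :=
  card_equiv e fun i => by simp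

theorem le_card_filter_strictRank_lt (a : ι → β) {k : ℕ} (hk : k ≤ Fintype.card ι) :
    k ≤ #{j | strictRank a j < k} := by
  by_contra! hT
  set T : Finset ι := {j | strictRank a j < k}
  -- a minimiser of `a` outside `T` has everything strictly below it inside `T`
  obtain ⟨j, hj, hmin⟩ := Tᶜ.exists_min_image a (card_pos.1 (by rw [card_compl]; omega))
  have hbelow : ({i | a i < a j} : Finset ι) ⊆ T := fun i hi => by
    by_contra hiT
    exact (hmin i (mem_compl.2 hiT)).not_gt (mem_filter.1 hi).2
  exact mem_compl.1 hj (mem_filter.2 ⟨mem_univ j, (card_le_card hbelow).trans_lt hT⟩)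

end StrictRank

theorem card_filter_lt_eq_countP_ofFn {m : ℕ} (a : Fin m → ℝ) (x : ℝ) :
    #{i | a i < x} = (List.ofFn a).countP (· < x) := by
  rw [← Multiset.coe_countP, ← Fin.univ_val_map, Multiset.countP_map]
  rfl

theorem le_kthSmallest_of_countP_lt {l : List ℝ} {k : ℕ} (hk : k ≤ l.length) {x : ℝ}
    (h : l.countP (· < x) < k) : x ≤ kthSmallest l k := by
  -- otherwise the first `k` entries of the sorted list all lie below `x`
  by_contra! hlt
  set l' := l.mergeSort (fun a b => a ≤ b)
  have hperm : l'.Perm l := List.mergeSort_perm l _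
  have hk' : k - 1 < l'.length := by rw [hperm.length_eq]; omega
  rw [show kthSmallest l k = l'[k - 1] from List.getD_eq_getElem _ _ hk'] at hlt
  have htake : ∀ y ∈ l'.take k, y < x := by
    intro y hy
    obtain ⟨i, hi, rfl⟩ := List.mem_iff_getElem.1 hy
    rw [List.length_take, Nat.lt_min] at hi
    have hle : l'[i] ≤ l'[k - 1] := List.sortedLE_mergeSort.monotone_get (a := ⟨i, hi.2⟩)
      (b := ⟨k - 1, hk'⟩) (Fin.mk_le_mk.2 (Nat.le_sub_one_of_lt hi.1))
    rw [List.getElem_take]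
    exact hle.trans_lt hlt
  have := (l'.take_sublist k).countP_le (p := (· < x))
  rw [List.countP_eq_length.2 (by simpa using htake), hperm.countP_eq, List.length_take] at this
  omega

theorem le_kthSmallest_of_strictRank_last_lt {n k : ℕ} (hk : k ≤ n) (a : Fin (n + 1) → ℝ)
    (h : strictRank a (Fin.last n) < k) :
    a (Fin.last n) ≤ kthSmallest (List.ofFn fun i : Fin n => a i.castSucc) k := by
  refine le_kthSmallest_of_countP_lt (by simpa using hk) ?_
  rw [← card_filter_lt_eq_countP_ofFn]
  refine lt_of_le_of_lt (card_le_card_of_injOn Fin.castSucc (fun i hi => ?_)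
    (Fin.castSucc_injective n).injOn) h
  simpa using hi

theorem measurableSet_strictRank_lt {ι : Type*} [Fintype ι] (k : ℕ) (j : ι) :
    MeasurableSet {v : ι → ℝ | strictRank v j < k} := by
  have : Measurable fun v : ι → ℝ => strictRank v j := by
    simp only [strictRank, card_filter]
    exact Finset.measurable_sum _ fun i _ => Measurable.ite
      (measurableSet_lt (measurable_pi_apply i) (measurable_pi_apply j)) measurable_const
      measurable_const
  exact this measurableSet_Iio

theorem measurePreserving_comp_equiv {ι β : Type*} [Fintype ι] [MeasurableSpace β]
    (ν : Measure β) [SigmaFinite ν] (e : ι ≃ ι) :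
    MeasurePreserving (fun v : ι → β => v ∘ e) (Measure.pi fun _ => ν)
      (Measure.pi fun _ => ν) := by
  convert measurePreserving_piCongrLeft (fun _ : ι => ν) e.symm using 1
  ext v i
  simp [MeasurableEquiv.coe_piCongrLeft, Equiv.piCongrLeft_apply]

theorem natCast_mul_measure_univ_le_sum {α ι : Type*} [MeasurableSpace α] [Fintype ι]
    (μ : Measure α) {A : ι → Set α} (hA : ∀ j, MeasurableSet (A j)) {k : ℕ}
    (hk : ∀ x, k ≤ #{j | x ∈ A j}) : k * μ Set.univ ≤ ∑ j, μ (A j) := calc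
  k * μ Set.univ = ∫⁻ _, (k : ℝ≥0∞) ∂μ := (lintegral_const _).symm
  _ ≤ ∫⁻ x, ∑ j, (A j).indicator 1 x ∂μ := lintegral_mono fun x => by
    simp only [Set.indicator_apply, Pi.one_apply, sum_boole]
    exact_mod_cast hk x
  _ = ∑ j, μ (A j) := by
    rw [lintegral_finsetSum _ fun j _ => measurable_one.indicator (hA j)]
    simp only [lintegral_indicator_one (hA _)]

theorem le_card_mul_measure_pi_strictRank_lt {ι : Type*} [Fintype ι] (ν : Measure ℝ)
    [IsProbabilityMeasure ν] (j : ι) {k : ℕ} (hk : k ≤ Fintype.card ι) :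
    (k : ℝ≥0∞) ≤ Fintype.card ι * Measure.pi (fun _ : ι => ν) {v | strictRank v j < k} := by
  set R : ι → Set (ι → ℝ) := fun j => {v | strictRank v j < k}
  have hexch : ∀ j', Measure.pi (fun _ => ν) (R j') = Measure.pi (fun _ => ν) (R j) := by
    intro j'
    have hpre : (fun v : ι → ℝ => v ∘ Equiv.swap j j') ⁻¹' R j = R j' := by
      ext v
      simp [R, strictRank_comp_equiv]
    rw [← hpre, (measurePreserving_comp_equiv ν _).measure_preimage
      (measurableSet_strictRank_lt k j).nullMeasurableSet]
  calc (k : ℝ≥0∞) = k * Measure.pi (fun _ : ι => ν) Set.univ := by simp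
    _ ≤ ∑ j', Measure.pi (fun _ => ν) (R j') :=
      natCast_mul_measure_univ_le_sum _ (measurableSet_strictRank_lt k) fun v => by
        simpa [R] using le_card_filter_strictRank_lt v hk
    _ = _ := by simp [hexch, R]

theorem le_card_mul_measure_strictRank_lt {Ω ι : Type*} [MeasurableSpace Ω] [Fintype ι]
    (P : Measure Ω) [IsProbabilityMeasure P] {X : ι → Ω → ℝ} (hX : ∀ i, Measurable (X i))
    (hindep : iIndepFun X P) (j : ι) (hident : ∀ i, IdentDistrib (X i) (X j) P P) {k : ℕ}
    (hk : k ≤ Fintype.card ι) :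
    (k : ℝ≥0∞) ≤ Fintype.card ι * P {ω | strictRank (fun i => X i ω) j < k} := by
  have hlaw : P.map (fun ω i => X i ω) = Measure.pi fun _ => P.map (X j) := by
    rw [(iIndepFun_iff_map_fun_eq_pi_map fun i => (hX i).aemeasurable).1 hindep]
    simp only [fun i => (hident i).map_eq]
  have hevent : P {ω | strictRank (fun i => X i ω) j < k} =
      P.map (fun ω i => X i ω) {v | strictRank v j < k} :=
    (Measure.map_apply (measurable_pi_lambda _ hX) (measurableSet_strictRank_lt k j)).symm
  have := Measure.isProbabilityMeasure_map (μ := P) (hX j).aemeasurable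
  rw [hevent, hlaw]
  exact le_card_mul_measure_pi_strictRank_lt _ j hk

theorem ENNReal.ofReal_le_of_mul_le_natCast {m k : ℕ} {r : ℝ} {p : ℝ≥0∞} (hm : m ≠ 0)
    (hr : m * r ≤ k) (hp : (k : ℝ≥0∞) ≤ m * p) : ENNReal.ofReal r ≤ p := by
  rw [← ENNReal.mul_le_mul_iff_right (Nat.cast_ne_zero.2 hm) (ENNReal.natCast_ne_top m)]
  calc m * ENNReal.ofReal r = ENNReal.ofReal (m * r) := by
        rw [ENNReal.ofReal_mul (Nat.cast_nonneg _), ENNReal.ofReal_natCast]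
    _ ≤ ENNReal.ofReal k := ENNReal.ofReal_le_ofReal hr
    _ = k := ENNReal.ofReal_natCast k
    _ ≤ m * p := hp

theorem conformal_quantile_regression_coverage_general
    {Ω : Type*} [MeasurableSpace Ω] (P : Measure Ω) [IsProbabilityMeasure P]
    {𝒳 : Type*} [MeasurableSpace 𝒳]
    (n : ℕ) (α : ℝ)
    (hk : ⌈((n : ℝ) + 1) * (1 - α)⌉ ≤ (n : ℤ))
    (t_lo t_hi : 𝒳 → ℝ) (hlo : Measurable t_lo) (hhi : Measurable t_hi)
    (Z : Fin (n + 1) → Ω → 𝒳 × ℝ)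
    (hZmeas : ∀ i, Measurable (Z i))
    (hindep : iIndepFun Z P)
    (hident : ∀ i j, IdentDistrib (Z i) (Z j) P P)
    (qhat : Ω → ℝ)
    (hqhat : ∀ ω, qhat ω =
      kthSmallest
        (List.ofFn (fun i : Fin n =>
          max (t_lo (Z i.castSucc ω).1 - (Z i.castSucc ω).2)
              ((Z i.castSucc ω).2 - t_hi (Z i.castSucc ω).1)))
        (⌈((n : ℝ) + 1) * (1 - α)⌉.toNat)) :
    ENNReal.ofReal (1 - α) ≤
      P {ω | t_lo (Z (Fin.last n) ω).1 - qhat ω ≤ (Z (Fin.last n) ω).2 ∧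
             (Z (Fin.last n) ω).2 ≤ t_hi (Z (Fin.last n) ω).1 + qhat ω} := by
  set s : 𝒳 × ℝ → ℝ := fun z => max (t_lo z.1 - z.2) (z.2 - t_hi z.1)
  have hs : Measurable s := ((hlo.comp measurable_fst).sub measurable_snd).max
    (measurable_snd.sub (hhi.comp measurable_fst))
  set k := ⌈((n : ℝ) + 1) * (1 - α)⌉.toNat
  have hkn : k ≤ n := Int.toNat_le.2 hk
  have hk_real : ((n : ℝ) + 1) * (1 - α) ≤ k := by
    simpa only [k, Int.ceil_toNat] using Nat.le_ceil _
  have hrank := le_card_mul_measure_strictRank_lt P (X := fun i => s ∘ Z i)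
    (fun i => hs.comp (hZmeas i)) (hindep.comp _ fun _ => hs) (Fin.last n)
    (fun i => (hident i _).comp hs) (k := k) (by simp; omega)
  have hcover : {ω | strictRank (fun i => s (Z i ω)) (Fin.last n) < k} ⊆
      {ω | t_lo (Z (Fin.last n) ω).1 - qhat ω ≤ (Z (Fin.last n) ω).2 ∧
             (Z (Fin.last n) ω).2 ≤ t_hi (Z (Fin.last n) ω).1 + qhat ω} := fun ω hω => by
    have hscore := le_kthSmallest_of_strictRank_last_lt hkn _ hω
    rw [← hqhat ω, max_le_iff] at hscore
    constructor <;> linarith [hscore.1, hscore.2]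
  refine ENNReal.ofReal_le_of_mul_le_natCast (m := n + 1) n.succ_ne_zero (mod_cast hk_real) ?_
  calc (k : ℝ≥0∞) ≤ Fintype.card (Fin (n + 1)) * P _ := hrank
    _ ≤ _ := by rw [Fintype.card_fin]; exact mul_le_mul_right (measure_mono hcover) _

/-- **Coverage guarantee for conformalized quantile regression
(Algorithm 2, split conformal Quantile-DeepONet regression).**
Given i.i.d. pairs `(X₁,Y₁), …, (Xₙ,Yₙ), (X_test, Y_test)` in `𝒳 × ℝ`, measurable quantile
estimates `t_lo, t_hi : 𝒳 → ℝ`, calibration scores `sᵢ = max(t_lo(Xᵢ) - Yᵢ, Yᵢ - t_hi(Xᵢ))`,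
and `q̂` the `⌈(n+1)(1-α)⌉`-th smallest calibration score, we have
`ℙ(t_lo(X_test) - q̂ ≤ Y_test ≤ t_hi(X_test) + q̂) ≥ 1 - α`. -/
theorem conformal_quantile_regression_coverage
    {Ω : Type*} [MeasurableSpace Ω] (P : Measure Ω) [IsProbabilityMeasure P]
    {𝒳 : Type*} [MeasurableSpace 𝒳]
    (n : ℕ) (hn : 0 < n) (α : ℝ) (hα0 : 0 < α) (hα1 : α < 1)
    (hk : ⌈((n : ℝ) + 1) * (1 - α)⌉ ≤ (n : ℤ))
    (t_lo t_hi : 𝒳 → ℝ) (hlo : Measurable t_lo) (hhi : Measurable t_hi)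
    (Z : Fin (n + 1) → Ω → 𝒳 × ℝ)
    (hZmeas : ∀ i, Measurable (Z i))
    (hindep : iIndepFun Z P)
    (hident : ∀ i j, IdentDistrib (Z i) (Z j) P P)
    (qhat : Ω → ℝ)
    (hqhat : ∀ ω, qhat ω =
      kthSmallest
        (List.ofFn (fun i : Fin n =>
          max (t_lo (Z i.castSucc ω).1 - (Z i.castSucc ω).2)
              ((Z i.castSucc ω).2 - t_hi (Z i.castSucc ω).1)))
        (⌈((n : ℝ) + 1) * (1 - α)⌉.toNat)) :
    ENNReal.ofReal (1 - α) ≤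
      P {ω | t_lo (Z (Fin.last n) ω).1 - qhat ω ≤ (Z (Fin.last n) ω).2 ∧
             (Z (Fin.last n) ω).2 ≤ t_hi (Z (Fin.last n) ω).1 + qhat ω} :=
  conformal_quantile_regression_coverage_general P n α hk t_lo t_hi hlo hhi Z hZmeas hindep hident
    qhat hqhat
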